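/- Let u, v : ℝ × ℝ → ℝ be smooth functions solving the Hirota–Satsuma system. Define w = −(1/6)u² − (1/2)v and h = (1/3)u_{xx} − (2/27)u³ − (1/3)uv − (1/2)v_x. Then (w, h) solves the good Boussinesq system: w_t = h_x and h_t + (1/3) w_{xxx} + (4/3)(w²)_x = 0. -/

import Mathlib

/-- Partial derivative in the first (space) variable. -/
noncomputable def pdx (f : ℝ → ℝ → ℝ) : ℝ → ℝ → ℝ := fun x t => deriv (fun x' => f x' t) x

/-- Partial derivative in the second (time) variable. -/
noncomputable def pdt (f : ℝ → ℝ → ℝ) : ℝ → ℝ → ℝ := fun x t => deriv (fun t' => f x t') t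

/-- The Hirota–Satsuma system. -/
def HirotaSatsuma (u v : ℝ → ℝ → ℝ) : Prop :=
  ∀ x t : ℝ,
    pdt u x t = -(pdx (pdx u) x t) + (2/3) * u x t * pdx u x t + 2 * pdx v x t ∧
    pdt v x t = -(2/3) * pdx (pdx (pdx u)) x t + (2/3) * u x t * pdx (pdx u) x t
      + (2/3) * pdx u x t * v x t - (2/3) * u x t * pdx v x t + pdx (pdx v) x t

/-- The good Boussinesq system. -/
def GoodBoussinesq (w h : ℝ → ℝ → ℝ) : Prop :=
  ∀ x t : ℝ,
    pdt w x t = pdx h x t ∧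
    pdt h x t + (1/3) * pdx (pdx (pdx w)) x t
      + (4/3) * pdx (fun x t => (w x t)^2) x t = 0

/-- The modified Boussinesq system. -/
def ModifiedBoussinesq (p q : ℝ → ℝ → ℝ) : Prop :=
  ∀ x t : ℝ,
    pdt p x t = 2 * pdx (fun x t => p x t * q x t) x t + pdx (pdx q) x t ∧
    pdt q x t = -(1/3) * pdx (pdx p) x t + (2/3) * p x t * pdx p x t
      - 2 * q x t * pdx q x t

def Sm (f : ℝ → ℝ → ℝ) : Prop := ContDiff ℝ (⊤ : ℕ∞) (fun p : ℝ × ℝ => f p.1 p.2)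

lemma Sm.hasDerivAt_x {f : ℝ → ℝ → ℝ} (hf : Sm f) (x t : ℝ) :
    HasDerivAt (fun x' => f x' t) (pdx f x t) x := by
  have h1 : DifferentiableAt ℝ (fun x' : ℝ => f x' t) x := by
    exact ((hf.differentiable (by simp)).comp
      (differentiable_id.prodMk (differentiable_const t))).differentiableAt
  exact h1.hasDerivAt

lemma Sm.hasDerivAt_t {f : ℝ → ℝ → ℝ} (hf : Sm f) (x t : ℝ) :
    HasDerivAt (fun t' => f x t') (pdt f x t) t := by
  have h1 : DifferentiableAt ℝ (fun t' : ℝ => f x t') t := by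
    exact ((hf.differentiable (by simp)).comp
      ((differentiable_const x).prodMk differentiable_id)).differentiableAt
  exact h1.hasDerivAt

lemma pdx_eq_fderiv {f : ℝ → ℝ → ℝ} (hf : Sm f) (x t : ℝ) :
    pdx f x t = fderiv ℝ (fun p : ℝ × ℝ => f p.1 p.2) (x, t) (1, 0) := by
  have hc : HasDerivAt (fun x' : ℝ => (x', t)) ((1 : ℝ), (0 : ℝ)) x :=
    (hasDerivAt_id x).prodMk (hasDerivAt_const x t)
  have hF : HasFDerivAt (fun p : ℝ × ℝ => f p.1 p.2)
      (fderiv ℝ (fun p : ℝ × ℝ => f p.1 p.2) (x, t)) (x, t) :=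
    ((hf.differentiable (by simp)) (x, t)).hasFDerivAt
  exact (hF.comp_hasDerivAt x hc).deriv

lemma pdt_eq_fderiv {f : ℝ → ℝ → ℝ} (hf : Sm f) (x t : ℝ) :
    pdt f x t = fderiv ℝ (fun p : ℝ × ℝ => f p.1 p.2) (x, t) (0, 1) := by
  have hc : HasDerivAt (fun t' : ℝ => (x, t')) ((0 : ℝ), (1 : ℝ)) t :=
    (hasDerivAt_const t x).prodMk (hasDerivAt_id t)
  have hF : HasFDerivAt (fun p : ℝ × ℝ => f p.1 p.2)
      (fderiv ℝ (fun p : ℝ × ℝ => f p.1 p.2) (x, t)) (x, t) :=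
    ((hf.differentiable (by simp)) (x, t)).hasFDerivAt
  exact (hF.comp_hasDerivAt t hc).deriv

lemma Sm.pdx {f : ℝ → ℝ → ℝ} (hf : Sm f) : Sm (_root_.pdx f) := by
  have h1 : (fun p : ℝ × ℝ => _root_.pdx f p.1 p.2)
      = fun p : ℝ × ℝ => (fderiv ℝ (fun p : ℝ × ℝ => f p.1 p.2) p) (1, 0) := by
    funext p
    exact pdx_eq_fderiv hf p.1 p.2
  unfold Sm
  rw [h1]
  exact (ContinuousLinearMap.apply ℝ ℝ ((1 : ℝ), (0 : ℝ))).contDiff.comp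
    (hf.fderiv_right (by simp))

lemma Sm.pdt {f : ℝ → ℝ → ℝ} (hf : Sm f) : Sm (_root_.pdt f) := by
  have h1 : (fun p : ℝ × ℝ => _root_.pdt f p.1 p.2)
      = fun p : ℝ × ℝ => (fderiv ℝ (fun p : ℝ × ℝ => f p.1 p.2) p) (0, 1) := by
    funext p
    exact pdt_eq_fderiv hf p.1 p.2
  unfold Sm
  rw [h1]
  exact (ContinuousLinearMap.apply ℝ ℝ ((0 : ℝ), (1 : ℝ))).contDiff.comp
    (hf.fderiv_right (by simp))

lemma pdt_pdx_comm {f : ℝ → ℝ → ℝ} (hf : Sm f) : pdt (pdx f) = pdx (pdt f) := by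
  set F : ℝ × ℝ → ℝ := fun p => f p.1 p.2 with hF
  have hFd : Differentiable ℝ F := hf.differentiable (by simp)
  have hF' : ContDiff ℝ (⊤ : ℕ∞) (fderiv ℝ F) := hf.fderiv_right (by simp)
  have hF'd : Differentiable ℝ (fderiv ℝ F) := hF'.differentiable (by simp)
  funext x t
  have key : ∀ v w : ℝ × ℝ,
      fderiv ℝ (fderiv ℝ F) (x, t) v w = fderiv ℝ (fderiv ℝ F) (x, t) w v := by
    intro v w
    exact second_derivative_symmetric (fun y => (hFd y).hasFDerivAt)
      ((hF'd (x, t)).hasFDerivAt) v w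
  -- pdt (pdx f) x t
  have h1 : pdt (pdx f) x t = fderiv ℝ (fderiv ℝ F) (x, t) (0, 1) (1, 0) := by
    have hc : HasDerivAt (fun t' : ℝ => (x, t')) ((0 : ℝ), (1 : ℝ)) t :=
      (hasDerivAt_const t x).prodMk (hasDerivAt_id t)
    have h2 : HasDerivAt (fun t' => fderiv ℝ F (x, t'))
        (fderiv ℝ (fderiv ℝ F) (x, t) (0, 1)) t :=
      ((hF'd (x, t)).hasFDerivAt).comp_hasDerivAt t hc
    have h3 : HasDerivAt (fun t' => fderiv ℝ F (x, t') (1, 0))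
        (fderiv ℝ (fderiv ℝ F) (x, t) (0, 1) (1, 0)) t :=
      ((ContinuousLinearMap.apply ℝ ℝ ((1 : ℝ), (0 : ℝ))).hasFDerivAt).comp_hasDerivAt t h2
    have h4 : (fun t' => pdx f x t') = fun t' => fderiv ℝ F (x, t') (1, 0) := by
      funext t'
      exact pdx_eq_fderiv hf x t'
    show deriv (fun t' => pdx f x t') t = _
    rw [h4]
    exact h3.deriv
  have h5 : pdx (pdt f) x t = fderiv ℝ (fderiv ℝ F) (x, t) (1, 0) (0, 1) := by
    have hc : HasDerivAt (fun x' : ℝ => (x', t)) ((1 : ℝ), (0 : ℝ)) x :=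
      (hasDerivAt_id x).prodMk (hasDerivAt_const x t)
    have h2 : HasDerivAt (fun x' => fderiv ℝ F (x', t))
        (fderiv ℝ (fderiv ℝ F) (x, t) (1, 0)) x :=
      ((hF'd (x, t)).hasFDerivAt).comp_hasDerivAt x hc
    have h3 : HasDerivAt (fun x' => fderiv ℝ F (x', t) (0, 1))
        (fderiv ℝ (fderiv ℝ F) (x, t) (1, 0) (0, 1)) x :=
      ((ContinuousLinearMap.apply ℝ ℝ ((0 : ℝ), (1 : ℝ))).hasFDerivAt).comp_hasDerivAt x h2
    have h4 : (fun x' => pdt f x' t) = fun x' => fderiv ℝ F (x', t) (0, 1) := by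
      funext x'
      exact pdt_eq_fderiv hf x' t
    show deriv (fun x' => pdt f x' t) x = _
    rw [h4]
    exact h3.deriv
  rw [h1, h5, key]

lemma pdx_fn {f f' : ℝ → ℝ → ℝ} (h : ∀ x t, HasDerivAt (fun x' => f x' t) (f' x t) x) :
    pdx f = f' :=
  funext fun x => funext fun t => (h x t).deriv

lemma pdt_fn {f f' : ℝ → ℝ → ℝ} (h : ∀ x t, HasDerivAt (fun t' => f x t') (f' x t) t) :
    pdt f = f' :=
  funext fun x => funext fun t => (h x t).deriv

/-- The Miura transformation from the Hirota–Satsuma system to the good Boussinesq system. -/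
theorem miura_HS_to_GB (u v : ℝ → ℝ → ℝ)
    (hu : ContDiff ℝ (⊤ : ℕ∞) (fun p : ℝ × ℝ => u p.1 p.2))
    (hv : ContDiff ℝ (⊤ : ℕ∞) (fun p : ℝ × ℝ => v p.1 p.2))
    (hHS : HirotaSatsuma u v) :
    GoodBoussinesq
      (fun x t => -(1/6) * (u x t)^2 - (1/2) * v x t)
      (fun x t => (1/3) * pdx (pdx u) x t - (2/27) * (u x t)^3
        - (1/3) * u x t * v x t - (1/2) * pdx v x t) := by
  have smu : Sm u := hu
  have smv : Sm v := hv
  have sma : Sm (pdx u) := smu.pdx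
  have smb : Sm (pdx (pdx u)) := sma.pdx
  have smc : Sm (pdx (pdx (pdx u))) := smb.pdx
  have smp : Sm (pdx v) := smv.pdx
  have smq : Sm (pdx (pdx v)) := smp.pdx
  -- HS equations as function equalities
  have hut : pdt u = fun x t =>
      -(pdx (pdx u) x t) + 2/3 * u x t * pdx u x t + 2 * pdx v x t :=
    funext fun x => funext fun t => (hHS x t).1
  have hvt : pdt v = fun x t =>
      -(2/3) * pdx (pdx (pdx u)) x t + 2/3 * u x t * pdx (pdx u) x t
        + 2/3 * pdx u x t * v x t - 2/3 * u x t * pdx v x t + pdx (pdx v) x t :=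
    funext fun x => funext fun t => (hHS x t).2
  -- commutation of derivatives
  have cb : pdt (pdx (pdx u)) = pdx (pdx (pdt u)) := by
    rw [pdt_pdx_comm sma, pdt_pdx_comm smu]
  have cp : pdt (pdx v) = pdx (pdt v) := pdt_pdx_comm smv
  -- derivatives of w
  have dW : pdx (fun x t => -(1/6) * (u x t)^2 - (1/2) * v x t)
      = fun x t => -(1/3) * u x t * pdx u x t - (1/2) * pdx v x t := by
    refine pdx_fn fun x t => ?_
    have h := (((smu.hasDerivAt_x x t).pow 2).const_mul (-(1/6) : ℝ)).sub
      ((smv.hasDerivAt_x x t).const_mul ((1/2) : ℝ))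
    exact h.congr_deriv (by push_cast; ring)
  have dW2 : pdx (fun x t => -(1/3) * u x t * pdx u x t - (1/2) * pdx v x t)
      = fun x t => -(1/3) * (pdx u x t)^2 - (1/3) * u x t * pdx (pdx u) x t
          - (1/2) * pdx (pdx v) x t := by
    refine pdx_fn fun x t => ?_
    have h := ((((smu.hasDerivAt_x x t).const_mul (-(1/3) : ℝ)).mul
      (sma.hasDerivAt_x x t)).sub ((smp.hasDerivAt_x x t).const_mul ((1/2) : ℝ)))
    exact h.congr_deriv (by ring)
  have dW3 : pdx (fun x t => -(1/3) * (pdx u x t)^2 - (1/3) * u x t * pdx (pdx u) x t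
          - (1/2) * pdx (pdx v) x t)
      = fun x t => -(pdx u x t * pdx (pdx u) x t) - (1/3) * u x t * pdx (pdx (pdx u)) x t
          - (1/2) * pdx (pdx (pdx v)) x t := by
    refine pdx_fn fun x t => ?_
    have h := ((((sma.hasDerivAt_x x t).pow 2).const_mul (-(1/3) : ℝ)).sub
      (((smu.hasDerivAt_x x t).const_mul ((1/3) : ℝ)).mul (smb.hasDerivAt_x x t))).sub
      ((smq.hasDerivAt_x x t).const_mul ((1/2) : ℝ))
    exact h.congr_deriv (by push_cast; ring)
  have dWsq : pdx (fun x t => (-(1/6) * (u x t)^2 - (1/2) * v x t)^2)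
      = fun x t => 2 * (-(1/6) * (u x t)^2 - (1/2) * v x t)
          * (-(1/3) * u x t * pdx u x t - (1/2) * pdx v x t) := by
    refine pdx_fn fun x t => ?_
    have hw := (((smu.hasDerivAt_x x t).pow 2).const_mul (-(1/6) : ℝ)).sub
      ((smv.hasDerivAt_x x t).const_mul ((1/2) : ℝ))
    have h := hw.pow 2
    exact h.congr_deriv (by simp only [Pi.sub_apply, Pi.pow_apply]; push_cast; ring)
  -- time derivative of w
  have dtW : pdt (fun x t => -(1/6) * (u x t)^2 - (1/2) * v x t)
      = fun x t => -(1/3) * u x t * pdt u x t - (1/2) * pdt v x t := by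
    refine pdt_fn fun x t => ?_
    have h := (((smu.hasDerivAt_t x t).pow 2).const_mul (-(1/6) : ℝ)).sub
      ((smv.hasDerivAt_t x t).const_mul ((1/2) : ℝ))
    exact h.congr_deriv (by push_cast; ring)
  -- space derivative of h
  have dHx : pdx (fun x t => (1/3) * pdx (pdx u) x t - (2/27) * (u x t)^3
        - (1/3) * u x t * v x t - (1/2) * pdx v x t)
      = fun x t => (1/3) * pdx (pdx (pdx u)) x t - (2/9) * (u x t)^2 * pdx u x t
          - (1/3) * (pdx u x t * v x t + u x t * pdx v x t)
          - (1/2) * pdx (pdx v) x t := by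
    refine pdx_fn fun x t => ?_
    have h := ((((smb.hasDerivAt_x x t).const_mul ((1/3) : ℝ)).sub
      (((smu.hasDerivAt_x x t).pow 3).const_mul ((2/27) : ℝ))).sub
      (((smu.hasDerivAt_x x t).const_mul ((1/3) : ℝ)).mul (smv.hasDerivAt_x x t))).sub
      ((smp.hasDerivAt_x x t).const_mul ((1/2) : ℝ))
    exact h.congr_deriv (by push_cast; ring)
  -- time derivative of h
  have dtH : pdt (fun x t => (1/3) * pdx (pdx u) x t - (2/27) * (u x t)^3
        - (1/3) * u x t * v x t - (1/2) * pdx v x t)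
      = fun x t => (1/3) * pdt (pdx (pdx u)) x t - (2/9) * (u x t)^2 * pdt u x t
          - (1/3) * (pdt u x t * v x t + u x t * pdt v x t)
          - (1/2) * pdt (pdx v) x t := by
    refine pdt_fn fun x t => ?_
    have h := ((((smb.hasDerivAt_t x t).const_mul ((1/3) : ℝ)).sub
      (((smu.hasDerivAt_t x t).pow 3).const_mul ((2/27) : ℝ))).sub
      (((smu.hasDerivAt_t x t).const_mul ((1/3) : ℝ)).mul (smv.hasDerivAt_t x t))).sub
      ((smp.hasDerivAt_t x t).const_mul ((1/2) : ℝ))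
    exact h.congr_deriv (by push_cast; ring)
  -- derivatives of the HS right-hand sides
  have dU1 : pdx (fun x t =>
        -(pdx (pdx u) x t) + 2/3 * u x t * pdx u x t + 2 * pdx v x t)
      = fun x t => -(pdx (pdx (pdx u)) x t) + 2/3 * (pdx u x t)^2
          + 2/3 * u x t * pdx (pdx u) x t + 2 * pdx (pdx v) x t := by
    refine pdx_fn fun x t => ?_
    have h := (((smb.hasDerivAt_x x t).neg).add
      (((smu.hasDerivAt_x x t).const_mul ((2/3) : ℝ)).mul (sma.hasDerivAt_x x t))).add
      ((smp.hasDerivAt_x x t).const_mul (2 : ℝ))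
    exact h.congr_deriv (by ring)
  have dU2 : pdx (fun x t => -(pdx (pdx (pdx u)) x t) + 2/3 * (pdx u x t)^2
          + 2/3 * u x t * pdx (pdx u) x t + 2 * pdx (pdx v) x t)
      = fun x t => -(pdx (pdx (pdx (pdx u))) x t)
          + 2 * pdx u x t * pdx (pdx u) x t + 2/3 * u x t * pdx (pdx (pdx u)) x t
          + 2 * pdx (pdx (pdx v)) x t := by
    refine pdx_fn fun x t => ?_
    have h := ((((smc.hasDerivAt_x x t).neg).add
      (((sma.hasDerivAt_x x t).pow 2).const_mul ((2/3) : ℝ))).add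
      (((smu.hasDerivAt_x x t).const_mul ((2/3) : ℝ)).mul (smb.hasDerivAt_x x t))).add
      (((smq.hasDerivAt_x x t)).const_mul (2 : ℝ))
    exact h.congr_deriv (by push_cast; ring)
  have dV1 : pdx (fun x t =>
        -(2/3) * pdx (pdx (pdx u)) x t + 2/3 * u x t * pdx (pdx u) x t
          + 2/3 * pdx u x t * v x t - 2/3 * u x t * pdx v x t + pdx (pdx v) x t)
      = fun x t => -(2/3) * pdx (pdx (pdx (pdx u))) x t
          + 2/3 * (pdx u x t * pdx (pdx u) x t + u x t * pdx (pdx (pdx u)) x t)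
          + 2/3 * (pdx (pdx u) x t * v x t + pdx u x t * pdx v x t)
          - 2/3 * (pdx u x t * pdx v x t + u x t * pdx (pdx v) x t)
          + pdx (pdx (pdx v)) x t := by
    refine pdx_fn fun x t => ?_
    have h := (((((smc.hasDerivAt_x x t).const_mul (-(2/3) : ℝ)).add
      (((smu.hasDerivAt_x x t).const_mul ((2/3) : ℝ)).mul (smb.hasDerivAt_x x t))).add
      (((sma.hasDerivAt_x x t).const_mul ((2/3) : ℝ)).mul (smv.hasDerivAt_x x t))).sub
      (((smu.hasDerivAt_x x t).const_mul ((2/3) : ℝ)).mul (smp.hasDerivAt_x x t))).add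
      (smq.hasDerivAt_x x t)
    exact h.congr_deriv (by ring)
  unfold GoodBoussinesq
  intro x t
  constructor
  · simp only [dtW, dHx, hut, hvt]
    ring
  · simp only [dtH, cb, cp, hut, hvt, dU1, dU2, dV1, dW, dW2, dW3, dWsq]
    ring
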